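/- arXiv:1106.3261 — 2 statements merged into one kernel-verified Lean document; each statement's English description precedes it below -/
import Mathlib

section
/- In the coordinate model of canonical vector fields and vertical endomorphisms on T^kQ, the composition satisfies J_r(Δ_s) = 0 if r+s ≥ k+1 and J_r(Δ_s) = Δ_{r+s} if r+s < k+1, where Δ_s is the vector with components Δ_s = Σ_{i=0}^{k−s} ((s+i)!/i!) q_{i+1}^A e_{s+i,A} and J_r acts as J_r(e_{i,A}) = ((r+i)!/i!) e_{r+i,A} for i ≤ k−r, 0 otherwise. -/
/-- The ring of "functions" of the variables `q_i^A` (`i ∈ ℕ`, `A ∈ Fin n`). -/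
abbrev Coeff (n : ℕ) := ((ℕ × Fin n) → ℝ) → ℝ

/-- The coordinate function `q_i^A` as an element of the coefficient ring. -/
def qv (n : ℕ) (i : ℕ) (A : Fin n) : Coeff n := fun x => x (i, A)

/-- Coordinate model of the `r`-th vertical endomorphism `J_r` on vector fields on `T^k Q`:
`J_r(e_{i,A}) = ((r+i)!/i!) e_{r+i,A}` for `i ≤ k-r`, `0` otherwise, in components. -/
def Jmod (k n r : ℕ) (v : Fin (k+1) → Fin n → Coeff n) : Fin (k+1) → Fin n → Coeff n :=
  fun j A =>
    if r ≤ (j : ℕ) then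
      (fun _ => ((Nat.descFactorial (j : ℕ) r : ℕ) : ℝ)) *
        v ⟨(j : ℕ) - r, by have := j.isLt; omega⟩ A
    else 0

/-- The `s`-th canonical vector field `Δ_s = Σ_{i=0}^{k-s} ((s+i)!/i!) q_{i+1}^A e_{s+i,A}`,
in components. -/
def Delta (k n s : ℕ) : Fin (k+1) → Fin n → Coeff n :=
  fun j A =>
    if s ≤ (j : ℕ) then
      (fun _ => ((Nat.descFactorial (j : ℕ) s : ℕ) : ℝ)) * qv n ((j : ℕ) - s + 1) A
    else 0

/-
Componentwise, `J_r(Δ_s)` has `j`-th entry `j^{(r)} (j-r)^{(s)} q_{j-r-s+1}` when `r + s ≤ j`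
and `0` otherwise, and the falling factorials multiply to `j^{(r+s)}`. So `J_r Δ_s = Δ_{r+s}`
for all `r, s`, and `Δ_m = 0` as soon as `m > k`, since then no index `j ≤ k` satisfies `m ≤ j`.
-/

theorem Delta_eq_zero_of_lt {k n m : ℕ} (hm : k < m) : Delta k n m = 0 := by
  funext j A
  have hj : ¬ m ≤ (j : ℕ) := by have := j.isLt; omega
  simp [Delta, hj]

theorem Jmod_Delta (k n r s : ℕ) : Jmod k n r (Delta k n s) = Delta k n (r + s) := by
  funext j A
  by_cases hrs : r + s ≤ (j : ℕ)
  · have hr : r ≤ (j : ℕ) := by omega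
    have hs : s ≤ (j : ℕ) - r := by omega
    have hfac : ((j : ℕ) - r).descFactorial s * (j : ℕ).descFactorial r =
        (j : ℕ).descFactorial (r + s) := by
      simpa using Nat.descFactorial_mul_descFactorial (n := (j : ℕ)) (Nat.le_add_right r s)
    funext x
    simp only [Jmod, Delta, if_pos hr, if_pos hs, if_pos hrs, Pi.mul_apply, ← hfac,
      Nat.sub_sub]
    push_cast
    ring
  · by_cases hr : r ≤ (j : ℕ)
    · have hs : ¬ s ≤ (j : ℕ) - r := by omega
      simp [Jmod, Delta, hr, hs, hrs]
    · simp [Jmod, Delta, hr, hrs]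

theorem vertical_endomorphism_canonical_field_general (k n r s : ℕ) :
    (k + 1 ≤ r + s → Jmod k n r (Delta k n s) = 0) ∧
    (r + s < k + 1 → Jmod k n r (Delta k n s) = Delta k n (r + s)) :=
  ⟨fun h => (Jmod_Delta k n r s).trans (Delta_eq_zero_of_lt h), fun _ => Jmod_Delta k n r s⟩

/-- `J_r(Δ_s) = 0` if `r + s ≥ k+1`, and `J_r(Δ_s) = Δ_{r+s}` if `r + s < k+1`. -/
theorem vertical_endomorphism_canonical_field (k n r s : ℕ) (hk : 1 ≤ k) (hn : 1 ≤ n)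
    (hr1 : 1 ≤ r) (hrk : r ≤ k) (hs1 : 1 ≤ s) (hsk : s ≤ k) :
    (k + 1 ≤ r + s → Jmod k n r (Delta k n s) = 0) ∧
    (r + s < k + 1 → Jmod k n r (Delta k n s) = Delta k n (r + s)) :=
  vertical_endomorphism_canonical_field_general k n r s
end

section
/- A curve (q_0(t),…,q_{2k−1}(t), p^0(t),…,p^{k−1}(t)) in ℝ^{3k} solving the unified-formalism ODE system q_i' = q_{i+1} (0 ≤ i ≤ 2k−2), together with the momentum equations (p^0)' = ∂L/∂q_0 and (p^i)' = ∂L/∂q_i − p^{i−1} (1 ≤ i ≤ k−1) and the constraint p^{k−1} = ∂L/∂q_k along the curve, satisfies the k-th order Euler–Lagrange equation Σ_{i=0}^{k} (−1)^i (d/dt)^i (∂L/∂q_i ∘ c) = 0, where c(t) = (q_0(t),…,q_k(t)). -/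
/-- A curve in the unified formalism (one degree of freedom) solving the ODE system
`q_i' = q_{i+1}` (`0 ≤ i ≤ 2k-2`), `(p⁰)' = ∂L/∂q₀ ∘ c`,
`(p^i)' = ∂L/∂q_i ∘ c - p^{i-1}` (`1 ≤ i ≤ k-1`), together with the constraint
`p^{k-1} = ∂L/∂q_k ∘ c`, satisfies the `k`-th order Euler–Lagrange equation
`Σ_{i=0}^k (-1)^i (d/dt)^i (∂L/∂q_i ∘ c) = 0`, where `c = (q_0,…,q_k)`. -/
theorem unified_curve_satisfies_EulerLagrange (k : ℕ) (hk : 1 ≤ k)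
    (L : (Fin (k+1) → ℝ) → ℝ) (hL : ContDiff ℝ (⊤ : ℕ∞) L)
    (q : Fin (2*k) → ℝ → ℝ) (p : Fin k → ℝ → ℝ)
    (hq : ∀ i, ContDiff ℝ (⊤ : ℕ∞) (q i)) (hp : ∀ j, ContDiff ℝ (⊤ : ℕ∞) (p j))
    (c : ℝ → Fin (k+1) → ℝ)
    (hc : ∀ (t : ℝ) (i : Fin (k+1)), c t i = q ⟨(i : ℕ), by have := i.isLt; omega⟩ t)
    (hqder : ∀ (i : Fin (2*k)) (hi : (i : ℕ) ≤ 2*k - 2) (t : ℝ),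
      deriv (q i) t = q ⟨(i : ℕ) + 1, by omega⟩ t)
    (hp0 : ∀ t : ℝ, deriv (p ⟨0, by omega⟩) t
      = fderiv ℝ L (c t) (Pi.single (⟨0, by omega⟩ : Fin (k+1)) 1))
    (hpi : ∀ (i : Fin k) (hi : 1 ≤ (i : ℕ)) (t : ℝ),
      deriv (p i) t
        = fderiv ℝ L (c t) (Pi.single (⟨(i : ℕ), by have := i.isLt; omega⟩ : Fin (k+1)) 1)
          - p ⟨(i : ℕ) - 1, by have := i.isLt; omega⟩ t)
    (hcon : ∀ t : ℝ, p ⟨k - 1, by omega⟩ t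
      = fderiv ℝ L (c t) (Pi.single (⟨k, by omega⟩ : Fin (k+1)) 1)) :
    ∀ t : ℝ, ∑ i : Fin (k+1),
      (-1 : ℝ) ^ (i : ℕ) *
        iteratedDeriv (i : ℕ) (fun s => fderiv ℝ L (c s) (Pi.single i 1)) t = 0 := by
  have hceq : c = fun t (i : Fin (k+1)) => q ⟨(i : ℕ), by have := i.isLt; omega⟩ t := by
    funext t i; exact hc t i
  have hcsmooth : ContDiff ℝ (⊤:ℕ∞) c := by
    rw [hceq]; exact contDiff_pi.2 fun i => (hq _).of_le (by simp)
  -- F i : the function t ↦ ∂L/∂q_i (c t), extended by 0 for i > k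
  set F : ℕ → ℝ → ℝ := fun i t =>
    if h : i < k + 1 then fderiv ℝ L (c t) (Pi.single (⟨i, h⟩ : Fin (k+1)) 1) else 0
    with hF
  have hFapp : ∀ (i : ℕ) (h : i < k + 1) (t : ℝ),
      F i t = fderiv ℝ L (c t) (Pi.single (⟨i, h⟩ : Fin (k+1)) 1) := fun i h t => dif_pos h
  have hFsmooth : ∀ i, ContDiff ℝ (⊤:ℕ∞) (F i) := by
    intro i
    by_cases h : i < k + 1
    · simp only [hF, dif_pos h]
      have h1 : ContDiff ℝ (⊤:ℕ∞) (fderiv ℝ L) :=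
        (hL.of_le le_rfl).fderiv_right (m := (⊤:ℕ∞)) (by exact_mod_cast le_top)
      exact (h1.comp hcsmooth).clm_apply contDiff_const
    · simp only [hF, dif_neg h]; exact contDiff_const
  have hFd : ∀ i j t, DifferentiableAt ℝ (iteratedDeriv j (F i)) t := by
    intro i j t
    rw [iteratedDeriv_eq_iterate]
    exact (ContDiff.iterate_deriv j (hFsmooth i)).differentiable (by simp) t
  -- key backward induction
  have key : ∀ n, n < k → ∀ t, p ⟨k - 1 - n, by omega⟩ t
      = ∑ j ∈ Finset.range (n+1), (-1:ℝ)^j * iteratedDeriv j (F (k - n + j)) t := by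
    intro n
    induction n with
    | zero =>
      intro _ t
      rw [Finset.sum_range_one]
      simp only [pow_zero, one_mul, iteratedDeriv_zero, Nat.sub_zero, Nat.add_zero]
      rw [hcon t, hFapp k (by omega) t]
    | succ n ih =>
      intro hn t
      have hprev := ih (by omega)
      have hpf : p ⟨k-1-n, by omega⟩
          = fun s => ∑ j ∈ Finset.range (n+1), (-1:ℝ)^j * iteratedDeriv j (F (k - n + j)) s :=
        funext hprev
      have hder : deriv (p ⟨k-1-n, by omega⟩) t
          = ∑ j ∈ Finset.range (n+1), (-1:ℝ)^j * iteratedDeriv (j+1) (F (k - n + j)) t := by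
        rw [hpf, deriv_fun_sum (fun j _ => ((hFd _ j t).const_mul _))]
        exact Finset.sum_congr rfl fun j _ => by
          rw [deriv_const_mul _ (hFd _ j t), iteratedDeriv_succ]
      have h1 : 1 ≤ k - 1 - n := by omega
      have hpieq := hpi ⟨k-1-n, by omega⟩ h1 t
      -- hpieq : deriv (p ⟨k-1-n,_⟩) t = fderiv ... (single ⟨k-1-n⟩ 1) - p ⟨k-1-n-1⟩ t
      have hidx : p ⟨k - 1 - (n+1), by omega⟩ t = p ⟨k - 1 - n - 1, by omega⟩ t :=
        congrFun (congrArg p (Fin.ext (show k - 1 - (n+1) = k - 1 - n - 1 by omega))) t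
      have hFval : fderiv ℝ L (c t)
            (Pi.single (⟨k-1-n, by omega⟩ : Fin (k+1)) 1) = F (k-1-n) t :=
        (hFapp _ (by omega) t).symm
      rw [hidx]
      have : p ⟨k - 1 - n - 1, by omega⟩ t
          = F (k-1-n) t - deriv (p ⟨k-1-n, by omega⟩) t := by
        rw [hpieq, hFval]; ring
      rw [this, hder]
      conv_rhs => rw [Finset.sum_range_succ']
      have hF0 : (-1:ℝ)^0 * iteratedDeriv 0 (F (k - (n+1) + 0)) t = F (k-1-n) t := by
        simp only [pow_zero, one_mul, iteratedDeriv_zero]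
        congr 2; omega
      rw [hF0]
      have : ∀ j ∈ Finset.range (n+1),
          (-1:ℝ)^(j+1) * iteratedDeriv (j+1) (F (k - (n+1) + (j+1))) t
          = -((-1:ℝ)^j * iteratedDeriv (j+1) (F (k - n + j)) t) := by
        intro j _
        have : k - (n+1) + (j+1) = k - n + j := by omega
        rw [this, pow_succ]; ring
      rw [Finset.sum_congr rfl this, Finset.sum_neg_distrib]
      ring
  intro t
  have hk0 := key (k-1) (by omega) t
  -- p ⟨0⟩ t = ∑_{j<k} (-1)^j itd j (F (1+j)) t
  have hpf0 : p ⟨0, by omega⟩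
      = fun s => ∑ j ∈ Finset.range k, (-1:ℝ)^j * iteratedDeriv j (F (1 + j)) s := by
    funext s
    have := key (k-1) (by omega) s
    have e1 : (⟨k - 1 - (k-1), by omega⟩ : Fin k) = ⟨0, by omega⟩ :=
      Fin.ext (show k - 1 - (k-1) = 0 by omega)
    rw [e1] at this
    rw [this]
    have e2 : k - 1 + 1 = k := by omega
    rw [e2]
    exact Finset.sum_congr rfl fun j _ => by
      have : k - (k-1) + j = 1 + j := by omega
      rw [this]
  have hd0 : deriv (p ⟨0, by omega⟩) t
      = ∑ j ∈ Finset.range k, (-1:ℝ)^j * iteratedDeriv (j+1) (F (1 + j)) t := by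
    rw [hpf0, deriv_fun_sum (fun j _ => ((hFd _ j t).const_mul _))]
    exact Finset.sum_congr rfl fun j _ => by
      rw [deriv_const_mul _ (hFd _ j t), iteratedDeriv_succ]
  have hF00 : deriv (p ⟨0, by omega⟩) t = F 0 t := by
    rw [hp0 t, hFapp 0 (by omega) t]
  -- rewrite the goal sum in terms of F
  have hgoal : ∑ i : Fin (k+1),
      (-1 : ℝ) ^ (i : ℕ) *
        iteratedDeriv (i : ℕ) (fun s => fderiv ℝ L (c s) (Pi.single i 1)) t
      = ∑ i ∈ Finset.range (k+1), (-1:ℝ)^i * iteratedDeriv i (F i) t := by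
    rw [← Fin.sum_univ_eq_sum_range (fun i => (-1:ℝ)^i * iteratedDeriv i (F i) t)]
    refine Finset.sum_congr rfl fun i _ => ?_
    have he : (fun s => fderiv ℝ L (c s) (Pi.single i 1)) = F (i:ℕ) :=
      funext fun s => (hFapp _ i.isLt s).symm
    rw [he]
  rw [hgoal, Finset.sum_range_succ']
  have hz : (-1:ℝ)^0 * iteratedDeriv 0 (F 0) t = F 0 t := by
    simp [iteratedDeriv_zero]
  rw [hz, ← hF00, hd0]
  have : ∀ j ∈ Finset.range k,
      (-1:ℝ)^(j+1) * iteratedDeriv (j+1) (F (j+1)) t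
      = -((-1:ℝ)^j * iteratedDeriv (j+1) (F (1 + j)) t) := by
    intro j _
    have e : 1 + j = j + 1 := Nat.add_comm 1 j
    rw [e, pow_succ]; ring
  rw [Finset.sum_congr rfl this, Finset.sum_neg_distrib]
  ring
end
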